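/- Suppose in addition that r and k are coprime odd integers with rk ≡ 3 (mod 4); set n = (r+k)/2 (even), m = (r−k)/2 (odd), and β = 2·sqrt(mn)/(m+n). Define q : ℝ → ℝ by q(v) = ∫₀^v dt / sqrt(1 − β² sin²(t)). Then q is a strictly increasing bijection of ℝ (since 0 < β < 1), and for all (u,v) ∈ ℝ²: Ĩ(u + π/2, q⁻¹(q(π/2) − q(v))) = Ĩ(u, v). (This extra orientation-reversing symmetry makes the bipolar surface τ̃_{r,k} a Klein bottle when rk ≡ 3 mod 4.) -/

import Mathlib

open Real

/-- The normalizing factor `D(v) = sqrt(r²cos²v + k²sin²v)`. -/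
noncomputable def lawsonD (r k : ℝ) (v : ℝ) : ℝ :=
  Real.sqrt (r ^ 2 * cos v ^ 2 + k ^ 2 * sin v ^ 2)

/-- The bipolar surface map `Ĩ : ℝ² → ℝ⁶` of the Lawson surface `τ_{r,k}`. -/
noncomputable def bipolarI (r k : ℝ) (u v : ℝ) : Fin 6 → ℝ := fun i =>
  ![-(k * sin v * cos v),
    r * sin v * cos v,
    -(r * cos v ^ 2 * sin (k * u) * cos (r * u)) - k * sin v ^ 2 * sin (r * u) * cos (k * u),
    r * cos v ^ 2 * sin (r * u) * cos (k * u) + k * sin v ^ 2 * sin (k * u) * cos (r * u),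
    -(r * cos v ^ 2 * sin (k * u) * sin (r * u)) + k * sin v ^ 2 * cos (r * u) * cos (k * u),
    r * cos v ^ 2 * cos (k * u) * cos (r * u) - k * sin v ^ 2 * sin (r * u) * sin (k * u)] i
    / lawsonD r k v

/-!
Write `D = lawsonD r k`. Since `m + n = r` and `4mn = r² - k²`, we have
`1 - β² sin² t = (D t / r)²`, so `q' = r / D ≥ 1` and `q` is an increasing bijection.
The angle `W = dualAngle r k`, with `sin W = r cos v / D` and `cos W = k sin v / D`, satisfies
`D ∘ W = rk / D` and `W' = -rk / D²`, so `(q ∘ W)' = -q'` and `q (W v) = q (π/2) - q v`.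
In `Ĩ (u + π/2, W v)` the substitution `v ↦ W v` exchanges `r cos² v` and `k sin² v` up to the
factor `rk / D²`, which the normalisation by `D ∘ W` absorbs, while `u ↦ u + π/2` exchanges
`sin ku cos ru` with `cos ku sin ru` and `cos ku cos ru` with `-sin ku sin ru`; the latter because
`sin (rπ/2) sin (kπ/2) = (cos mπ - cos nπ) / 2 = -1` for `m` odd and `n` even.
-/

open Filter

theorem strictMono_bijective_of_one_le_deriv {f f' : ℝ → ℝ} (hf : ∀ x, HasDerivAt f (f' x) x)
    (hf' : ∀ x, 1 ≤ f' x) : StrictMono f ∧ Function.Bijective f := by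
  have hmono : StrictMono f := strictMono_of_hasDerivAt_pos hf fun x => one_pos.trans_le (hf' x)
  have hsub : Monotone fun x => f x - x :=
    monotone_of_hasDerivAt_nonneg (fun x => (hf x).sub (hasDerivAt_id x))
      fun x => sub_nonneg.2 (hf' x)
  have htop : Tendsto f atTop atTop :=
    tendsto_atTop_mono' _ ((eventually_ge_atTop 0).mono fun x hx => show x + f 0 ≤ f x by
        linarith [show f 0 - 0 ≤ f x - x from hsub hx])
      (tendsto_atTop_add_const_right _ (f 0) tendsto_id)
  have hbot : Tendsto f atBot atBot :=
    tendsto_atBot_mono' _ ((eventually_le_atBot 0).mono fun x hx => show f x ≤ x + f 0 by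
        linarith [show f x - x ≤ f 0 - 0 from hsub hx])
      (tendsto_atBot_add_const_right _ (f 0) tendsto_id)
  have hcont : Continuous f := continuous_iff_continuousAt.2 fun x => (hf x).continuousAt
  exact ⟨hmono, hmono.injective, hcont.surjective htop hbot⟩

theorem eq_zero_of_hasDerivAt_rotation {a b c : ℝ → ℝ}
    (ha : ∀ x, HasDerivAt a (c x * b x) x) (hb : ∀ x, HasDerivAt b (-(c x * a x)) x)
    {x₀ : ℝ} (ha₀ : a x₀ = 0) (hb₀ : b x₀ = 0) (x : ℝ) : a x = 0 ∧ b x = 0 := by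
  have hE : ∀ y, HasDerivAt (fun y => a y ^ 2 + b y ^ 2) 0 y := fun y =>
    (((ha y).pow 2).add ((hb y).pow 2)).congr_deriv (by ring)
  have hconst := is_const_of_deriv_eq_zero (fun y => (hE y).differentiableAt)
    (fun y => (hE y).deriv) x x₀
  simp only [ha₀, hb₀] at hconst
  constructor <;> nlinarith [sq_nonneg (a x), sq_nonneg (b x)]

theorem sin_mul_pi_div_two_mul_sin_mul_pi_div_two {r k : ℤ} (hr : Odd r) (hk : Odd k)
    (hrk : r * k % 4 = 3) : sin (r * (π / 2)) * sin (k * (π / 2)) = -1 := by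
  obtain ⟨a, ha⟩ := hr
  obtain ⟨b, hb⟩ := hk
  have hprod : r * k = 4 * (a * b) + 2 * (a + b) + 1 := by rw [ha, hb]; ring
  obtain ⟨i, j, hi, hj⟩ : ∃ i j : ℤ, r - k = 2 * (2 * i + 1) ∧ r + k = 4 * j := by
    generalize a * b = c at hprod
    exact ⟨(a - b) / 2, (a + b + 1) / 2, by omega, by omega⟩
  have h₁ : cos (r * (π / 2) - k * (π / 2)) = -1 := by
    rw [← sub_mul, ← Int.cast_sub, hi, ← cos_int_mul_two_pi_add_pi i]
    congr 1; push_cast; ring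
  have h₂ : cos (r * (π / 2) + k * (π / 2)) = 1 := by
    rw [← add_mul, ← Int.cast_add, hj, ← cos_int_mul_two_pi j]
    congr 1; push_cast; ring
  rw [cos_sub] at h₁
  rw [cos_add] at h₂
  linarith

theorem cos_eq_zero_of_sin_mul_sin_eq_neg_one {x y : ℝ} (h : sin x * sin y = -1) :
    cos x = 0 := by
  have : sin x ^ 2 = 1 := by nlinarith [sin_sq_le_one x, sin_sq_le_one y]
  nlinarith [sin_sq_add_cos_sq x]

section Lawson

variable {R K : ℝ}

theorem lawsonD_sq (v : ℝ) : lawsonD R K v ^ 2 = R ^ 2 * cos v ^ 2 + K ^ 2 * sin v ^ 2 :=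
  sq_sqrt (by positivity)

theorem lawsonD_pos (hR : R ≠ 0) (hK : K ≠ 0) (v : ℝ) : 0 < lawsonD R K v := by
  refine sqrt_pos.2 ?_
  rcases eq_or_ne (cos v) 0 with hc | hc
  · have hs : sin v ^ 2 = 1 := by nlinarith [sin_sq_add_cos_sq v]
    rw [hc, hs]
    positivity
  · positivity

theorem lawsonD_le (hK : 0 ≤ K) (hKR : K ≤ R) (v : ℝ) : lawsonD R K v ≤ R := by
  have h : R ^ 2 * cos v ^ 2 + K ^ 2 * sin v ^ 2 ≤ R ^ 2 := by
    nlinarith [sin_sq_add_cos_sq v, mul_le_mul_of_nonneg_right (pow_le_pow_left₀ hK hKR 2)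
      (sq_nonneg (sin v))]
  calc lawsonD R K v ≤ √(R ^ 2) := sqrt_le_sqrt h
    _ = R := sqrt_sq (hK.trans hKR)

theorem continuous_lawsonD : Continuous (lawsonD R K) := by
  unfold lawsonD; fun_prop

theorem hasDerivAt_lawsonD (hR : R ≠ 0) (hK : K ≠ 0) (v : ℝ) :
    HasDerivAt (lawsonD R K) ((K ^ 2 - R ^ 2) * sin v * cos v / lawsonD R K v) v := by
  have hP : HasDerivAt (fun v => R ^ 2 * cos v ^ 2 + K ^ 2 * sin v ^ 2)
      (2 * (K ^ 2 - R ^ 2) * sin v * cos v) v :=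
    ((((hasDerivAt_cos v).pow 2).const_mul _).add
      (((hasDerivAt_sin v).pow 2).const_mul _)).congr_deriv (by ring)
  have hD := (lawsonD_pos hR hK v).ne'
  have hP0 : R ^ 2 * cos v ^ 2 + K ^ 2 * sin v ^ 2 ≠ 0 := by
    rw [← lawsonD_sq]; exact pow_ne_zero 2 hD
  refine (hP.sqrt hP0).congr_deriv ?_
  change _ / (2 * lawsonD R K v) = _
  field_simp

/-- The continuous angle with `sin = R cos v / D v` and `cos = K sin v / D v`. -/
noncomputable def dualAngle (R K v : ℝ) : ℝ :=
  π / 2 - ∫ t in (0:ℝ)..v, R * K / lawsonD R K t ^ 2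

theorem dualAngle_zero : dualAngle R K 0 = π / 2 := by simp [dualAngle]

theorem hasDerivAt_dualAngle (hR : R ≠ 0) (hK : K ≠ 0) (v : ℝ) :
    HasDerivAt (dualAngle R K) (-(R * K / lawsonD R K v ^ 2)) v := by
  have hc : Continuous fun t => R * K / lawsonD R K t ^ 2 :=
    continuous_const.div (continuous_lawsonD.pow 2) fun t =>
      pow_ne_zero 2 (lawsonD_pos hR hK t).ne'
  exact (hc.integral_hasStrictDerivAt 0 v).hasDerivAt.const_sub (π / 2)

theorem sin_dualAngle_and_cos_dualAngle (hR : 0 < R) (hK : 0 < K) (v : ℝ) :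
    sin (dualAngle R K v) = R * cos v / lawsonD R K v ∧
      cos (dualAngle R K v) = K * sin v / lawsonD R K v := by
  have hD := fun x => (lawsonD_pos hR.ne' hK.ne' x).ne'
  have hDx := fun x => hasDerivAt_lawsonD hR.ne' hK.ne' x
  have hW := fun x => hasDerivAt_dualAngle hR.ne' hK.ne' x
  let c x := -(R * K / lawsonD R K x ^ 2)
  have ha : ∀ x, HasDerivAt (fun x => sin (dualAngle R K x) - R * cos x / lawsonD R K x)
      (c x * (cos (dualAngle R K x) - K * sin x / lawsonD R K x)) x := fun x =>
    (((hasDerivAt_sin _).comp x (hW x)).sub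
      (((hasDerivAt_cos x).const_mul R).div (hDx x) (hD x))).congr_deriv (by
        have := hD x
        simp only [c]
        field_simp
        linear_combination
          sin x * lawsonD_sq (R := R) (K := K) x + K ^ 2 * sin x * sin_sq_add_cos_sq x)
  have hb : ∀ x, HasDerivAt (fun x => cos (dualAngle R K x) - K * sin x / lawsonD R K x)
      (-(c x * (sin (dualAngle R K x) - R * cos x / lawsonD R K x))) x := fun x =>
    (((hasDerivAt_cos _).comp x (hW x)).sub
      (((hasDerivAt_sin x).const_mul K).div (hDx x) (hD x))).congr_deriv (by
        have := hD x
        simp only [c]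
        field_simp
        linear_combination
          -cos x * lawsonD_sq (R := R) (K := K) x - R ^ 2 * cos x * sin_sq_add_cos_sq x)
  have hD₀ : lawsonD R K 0 = R := by simp [lawsonD, sqrt_sq hR.le]
  obtain ⟨h₁, h₂⟩ := eq_zero_of_hasDerivAt_rotation ha hb (x₀ := 0)
    (by simp [dualAngle_zero, hD₀, hR.ne']) (by simp [dualAngle_zero]) v
  exact ⟨sub_eq_zero.1 h₁, sub_eq_zero.1 h₂⟩

theorem lawsonD_dualAngle (hR : 0 < R) (hK : 0 < K) (v : ℝ) :
    lawsonD R K (dualAngle R K v) = R * K / lawsonD R K v := by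
  obtain ⟨hs, hc⟩ := sin_dualAngle_and_cos_dualAngle hR hK v
  have hD := lawsonD_pos hR.ne' hK.ne' v
  rw [lawsonD, hs, hc, ← sqrt_sq (by positivity : 0 ≤ R * K / lawsonD R K v)]
  congr 1
  rw [div_pow, div_pow, div_pow, mul_div_assoc', mul_div_assoc', ← add_div]
  congr 1
  linear_combination R ^ 2 * K ^ 2 * sin_sq_add_cos_sq v

theorem apply_dualAngle_add_apply (hR : 0 < R) (hK : 0 < K) {q : ℝ → ℝ}
    (hq : ∀ v, HasDerivAt q (R / lawsonD R K v) v) (v : ℝ) :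
    q (dualAngle R K v) + q v = q (π / 2) + q 0 := by
  have hconst : ∀ x, HasDerivAt (fun x => q (dualAngle R K x) + q x) 0 x := fun x =>
    (((hq _).comp x (hasDerivAt_dualAngle hR.ne' hK.ne' x)).add (hq x)).congr_deriv (by
      have := (lawsonD_pos hR.ne' hK.ne' x).ne'
      rw [lawsonD_dualAngle hR hK]
      field_simp
      ring)
  simpa [dualAngle_zero] using is_const_of_deriv_eq_zero (fun y => (hconst y).differentiableAt)
    (fun y => (hconst y).deriv) v 0

theorem hasDerivAt_integral_one_div_sqrt (hR : 0 < R) (hK : 0 < K) {β : ℝ}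
    (hβ : β ^ 2 = 1 - (K / R) ^ 2) (v : ℝ) :
    HasDerivAt (fun v => ∫ t in (0:ℝ)..v, 1 / √(1 - β ^ 2 * sin t ^ 2))
      (R / lawsonD R K v) v := by
  have hD := fun t => lawsonD_pos hR.ne' hK.ne' t
  have hintegrand : (fun t => 1 / √(1 - β ^ 2 * sin t ^ 2)) = fun t => R / lawsonD R K t := by
    funext t
    have hsq : 1 - β ^ 2 * sin t ^ 2 = (lawsonD R K t / R) ^ 2 := by
      rw [hβ, div_pow (lawsonD R K t), lawsonD_sq]
      field_simp
      linear_combination (-R ^ 2) * sin_sq_add_cos_sq t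
    rw [hsq, sqrt_sq (div_pos (hD t) hR).le, one_div_div]
  have hc : Continuous fun t => R / lawsonD R K t :=
    continuous_const.div continuous_lawsonD fun t => (hD t).ne'
  rw [hintegrand]
  exact (hc.integral_hasStrictDerivAt 0 v).hasDerivAt

theorem bipolarI_add_pi_div_two_dualAngle (hR : 0 < R) (hK : 0 < K)
    (hRK : sin (R * (π / 2)) * sin (K * (π / 2)) = -1) (u v : ℝ) :
    bipolarI R K (u + π / 2) (dualAngle R K v) = bipolarI R K u v := by
  have hcR := cos_eq_zero_of_sin_mul_sin_eq_neg_one hRK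
  have hcK := cos_eq_zero_of_sin_mul_sin_eq_neg_one ((mul_comm _ _).trans hRK)
  obtain ⟨hs, hc⟩ := sin_dualAngle_and_cos_dualAngle hR hK v
  have hD := (lawsonD_pos hR.ne' hK.ne' v).ne'
  funext i
  fin_cases i <;>
  simp only [bipolarI, Fin.reduceFinMk, Matrix.cons_val, lawsonD_dualAngle hR hK, hs, hc,
    mul_add, sin_add, cos_add, hcR, hcK] <;>
  field_simp <;>
  grind

end Lawson

theorem stmt_4_general (r k : ℤ) (hk : 0 < k) (hrk : k < r)
    (hro : Odd r) (hko : Odd k) (hmod : r * k % 4 = 3)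
    (n m β : ℝ) (hn : n = ((r : ℝ) + (k : ℝ)) / 2) (hm : m = ((r : ℝ) - (k : ℝ)) / 2)
    (hβ : β = 2 * Real.sqrt (m * n) / (m + n))
    (q : ℝ → ℝ) (hq : ∀ v, q v = ∫ t in (0:ℝ)..v, 1 / Real.sqrt (1 - β ^ 2 * sin t ^ 2)) :
    StrictMono q ∧ Function.Bijective q ∧
    ∀ u v : ℝ,
      bipolarI r k (u + π / 2) (Function.invFun q (q (π / 2) - q v)) = bipolarI r k u v := by
  have hK : (0 : ℝ) < k := by exact_mod_cast hk
  have hKR : (k : ℝ) < r := by exact_mod_cast hrk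
  have hR := hK.trans hKR
  have hβ2 : β ^ 2 = 1 - (k / r : ℝ) ^ 2 := by
    have hmn : m + n = r := by rw [hm, hn]; ring
    rw [hβ, hmn, div_pow, mul_pow, sq_sqrt (by rw [hm, hn]; nlinarith), hm, hn]
    field_simp
    ring
  have hq' : ∀ v, HasDerivAt q (r / lawsonD r k v) v := by
    rw [funext hq]
    exact hasDerivAt_integral_one_div_sqrt hR hK hβ2
  obtain ⟨hmono, hbij⟩ := strictMono_bijective_of_one_le_deriv hq' fun v =>
    (one_le_div (lawsonD_pos hR.ne' hK.ne' v)).2 (lawsonD_le hK.le hKR.le v)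
  refine ⟨hmono, hbij, fun u v => ?_⟩
  have hq₀ : q 0 = 0 := by simp [hq]
  have hinv : Function.invFun q (q (π / 2) - q v) = dualAngle r k v := by
    rw [show q (π / 2) - q v = q (dualAngle r k v) by
      linarith [apply_dualAngle_add_apply hR hK hq' v]]
    exact Function.leftInverse_invFun hbij.1 _
  rw [hinv]
  exact bipolarI_add_pi_div_two_dualAngle hR hK
    (sin_mul_pi_div_two_mul_sin_mul_pi_div_two hro hko hmod) u v

/-- When `rk ≡ 3 (mod 4)`, the extra orientation-reversing symmetry
`(u,v) ↦ (u + π/2, q⁻¹(q(π/2) − q(v)))` of `Ĩ` makes `τ̃_{r,k}` a Klein bottle. -/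
theorem stmt_4 (r k : ℤ) (hk : 0 < k) (hrk : k < r) (hcop : IsCoprime r k)
    (hro : Odd r) (hko : Odd k) (hmod : r * k % 4 = 3)
    (n m β : ℝ) (hn : n = ((r : ℝ) + (k : ℝ)) / 2) (hm : m = ((r : ℝ) - (k : ℝ)) / 2)
    (hβ : β = 2 * Real.sqrt (m * n) / (m + n))
    (q : ℝ → ℝ) (hq : ∀ v, q v = ∫ t in (0:ℝ)..v, 1 / Real.sqrt (1 - β ^ 2 * sin t ^ 2)) :
    StrictMono q ∧ Function.Bijective q ∧
    ∀ u v : ℝ,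
      bipolarI r k (u + π / 2) (Function.invFun q (q (π / 2) - q v)) = bipolarI r k u v :=
  stmt_4_general r k hk hrk hro hko hmod n m β hn hm hβ q hq
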